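/- arXiv:2107.01666 — 3 statements merged into one kernel-verified Lean document; each statement's English description precedes it below -/
import Mathlib

section
/- Let μ_j(λ) denote the multiplicity of j > 0 in a partition λ. Fix a partition c of 2n with all parts even, and a function ε from {j even : μ_j(c) is even and positive} to {0,1}. Then there is a unique pair (r, p), where r is a partition with all parts even and p is a partition in which every part occurs an even number of times, such that μ_j(r) + μ_j(p) = μ_j(c) for all j > 0 and μ_j(r) = 2 if j is even, μ_j(c) is even and positive and ε(j)=1; μ_j(r) = 0 if j is even and either μ_j(c) is even with ε(j)=0 or μ_j(c)=0; μ_j(r) = 1 if j is even with μ_j(c) odd; and μ_j(r) = 0 for j odd. Moreover, among all pairs (r,p) with μ_j(r)+μ_j(p)=μ_j(c) for all j > 0, all parts of r even, all multiplicities of p even, and ε(j)=1 iff j is a part of r (for j in the domain of ε), this pair maximizes |p|. -/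
/-- Partitions are encoded by their multiplicity functions.
mc is the multiplicity function of a partition c of 2n with all parts even
(mc j = 0 for odd j), ε takes values in {0,1}. There is a unique pair (r,p)
(given by multiplicity functions rp.1, rp.2) with all parts of r even, all
multiplicities of p even, μ_j(r)+μ_j(p)=μ_j(c), satisfying the explicit
description of μ_j(r), and maximizing |p| among all admissible pairs. -/
theorem stmt6 (n N : ℕ) (mc : ℕ → ℕ) (ε : ℕ → ℕ)
    (hmc00 : mc 0 = 0)
    (hmcodd : ∀ j, Odd j → mc j = 0)
    (hmc0 : ∀ j, N ≤ j → mc j = 0)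
    (hsum : ∑ j ∈ Finset.range N, j * mc j = 2*n)
    (hε : ∀ j, ε j ≤ 1) :
    ∃! rp : (ℕ → ℕ) × (ℕ → ℕ),
      (∀ j, rp.1 j + rp.2 j = mc j) ∧
      (∀ j, Odd j → rp.1 j = 0) ∧
      (∀ j, 0 < j → Even (rp.2 j)) ∧
      (∀ j, Even j → 0 < j → Even (mc j) → 0 < mc j → (ε j = 1 ↔ 0 < rp.1 j)) ∧
      (∀ j, Even j → 0 < j → Even (mc j) → 0 < mc j → ε j = 1 → rp.1 j = 2) ∧
      (∀ j, Even j → 0 < j → Even (mc j) → (ε j = 0 ∨ mc j = 0) → rp.1 j = 0) ∧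
      (∀ j, Even j → 0 < j → Odd (mc j) → rp.1 j = 1) ∧
      (∀ rp' : (ℕ → ℕ) × (ℕ → ℕ),
        ((∀ j, rp'.1 j + rp'.2 j = mc j) ∧
         (∀ j, Odd j → rp'.1 j = 0) ∧
         (∀ j, 0 < j → Even (rp'.2 j)) ∧
         (∀ j, Even j → 0 < j → Even (mc j) → 0 < mc j → (ε j = 1 ↔ 0 < rp'.1 j))) →
        ∑ j ∈ Finset.range N, j * rp'.2 j ≤ ∑ j ∈ Finset.range N, j * rp.2 j) := by
  obtain ⟨r, hr⟩ : ∃ r : ℕ → ℕ, ∀ j, r j =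
      (if Odd j then 0 else if Odd (mc j) then 1
       else if ε j = 1 ∧ 0 < mc j then 2 else 0) := ⟨_, fun _ => rfl⟩
  -- explicit values of r
  have hrodd : ∀ j, Odd j → r j = 0 := fun j hj => by rw [hr]; simp [hj]
  have hrmodd : ∀ j, Even j → Odd (mc j) → r j = 1 := fun j hje hm => by
    rw [hr]; simp [Nat.not_odd_iff_even.mpr hje, hm]
  have hr2 : ∀ j, Even j → Even (mc j) → ε j = 1 → 0 < mc j → r j = 2 := fun j hje hme h1 hp => by
    rw [hr]; simp [Nat.not_odd_iff_even.mpr hje, Nat.not_odd_iff_even.mpr hme, h1, hp]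
  have hr0 : ∀ j, Even j → Even (mc j) → (ε j ≠ 1 ∨ mc j = 0) → r j = 0 := fun j hje hme h => by
    rw [hr]
    rcases h with h | h
    · simp [Nat.not_odd_iff_even.mpr hje, Nat.not_odd_iff_even.mpr hme, h]
    · simp [Nat.not_odd_iff_even.mpr hje, Nat.not_odd_iff_even.mpr hme, h]
  have hrle : ∀ j, r j ≤ mc j := by
    intro j
    rw [hr]
    split_ifs with h1 h2 h3
    · exact Nat.zero_le _
    · rcases h2 with ⟨k, hk⟩; omega
    · rcases (Nat.not_odd_iff_even.mp h2) with ⟨k, hk⟩; omega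
    · exact Nat.zero_le _
  refine ⟨(r, fun j => mc j - r j), ⟨?_, hrodd, ?_, ?_, ?_, ?_, ?_, ?_⟩, ?_⟩
  · intro j; exact Nat.add_sub_cancel' (hrle j)
  · intro j hj
    show Even (mc j - r j)
    rcases Nat.even_or_odd j with hje | hjo
    · rcases Nat.even_or_odd (mc j) with hme | hmo
      · have hre : Even (r j) := by
          rcases Nat.decEq (ε j) 1 with h | h
          · rw [hr0 j hje hme (Or.inl h)]; exact Even.zero
          · rcases Nat.eq_zero_or_pos (mc j) with h0 | hp
            · rw [hr0 j hje hme (Or.inr h0)]; exact Even.zero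
            · rw [hr2 j hje hme h hp]; exact ⟨1, rfl⟩
        rcases hre with ⟨a, ha⟩; rcases hme with ⟨b, hb⟩
        have := hrle j
        exact ⟨b - a, by omega⟩
      · rw [hrmodd j hje hmo]
        rcases hmo with ⟨k, hk⟩
        exact ⟨k, by omega⟩
    · rw [hrodd j hjo, hmcodd j hjo]; exact Even.zero
  · intro j hje hj hme hmp
    show ε j = 1 ↔ 0 < r j
    constructor
    · intro h; rw [hr2 j hje hme h hmp]; omega
    · intro h; by_contra hne
      rw [hr0 j hje hme (Or.inl hne)] at h; omega
  · intro j hje hj hme hmp h1; exact hr2 j hje hme h1 hmp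
  · intro j hje hj hme h0
    rcases h0 with h | h
    · exact hr0 j hje hme (Or.inl (by omega))
    · exact hr0 j hje hme (Or.inr h)
  · intro j hje hj hmo; exact hrmodd j hje hmo
  · -- maximality
    rintro ⟨r', p'⟩ ⟨h1, h2, h3, h4⟩
    dsimp only at h1 h2 h3 h4
    apply Finset.sum_le_sum
    intro j _
    rcases Nat.eq_zero_or_pos j with rfl | hjp
    · simp
    apply Nat.mul_le_mul_left
    show p' j ≤ mc j - r j
    have hkey : r j ≤ r' j := by
      rcases Nat.even_or_odd j with hje | hjo
      · rcases Nat.even_or_odd (mc j) with hme | hmo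
        · rcases Nat.eq_zero_or_pos (mc j) with hm0 | hmp
          · rw [hr0 j hje hme (Or.inr hm0)]; omega
          · by_cases hε1 : ε j = 1
            · rw [hr2 j hje hme hε1 hmp]
              have hpos : 0 < r' j := (h4 j hje hjp hme hmp).mp hε1
              have hev : Even (r' j) := by
                have h3' := h3 j hjp
                rcases h3' with ⟨a, ha⟩; rcases hme with ⟨b, hb⟩
                have := h1 j
                exact ⟨b - a, by omega⟩
              rcases hev with ⟨a, ha⟩; omega
            · rw [hr0 j hje hme (Or.inl hε1)]; omega
        · rw [hrmodd j hje hmo]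
          have hev := h3 j hjp
          have := h1 j
          rcases hev with ⟨a, ha⟩; rcases hmo with ⟨b, hb⟩
          omega
      · rw [hrodd j hjo]; omega
    have := hrle j
    have := h1 j
    omega
  · -- uniqueness
    rintro ⟨r', p'⟩ ⟨h1, h2, h3, h4, h5, h6, h7, _⟩
    dsimp only at h1 h2 h3 h4 h5 h6 h7
    have hre : ∀ j, r' j = r j := by
      intro j
      rcases Nat.eq_zero_or_pos j with rfl | hjp
      · have h10 := h1 0
        have : r 0 = 0 := hr0 0 Even.zero (by rw [hmc00]; exact Even.zero) (Or.inr hmc00)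
        omega
      rcases Nat.even_or_odd j with hje | hjo
      · rcases Nat.even_or_odd (mc j) with hme | hmo
        · rcases Nat.eq_zero_or_pos (mc j) with hm0 | hmp
          · rw [h6 j hje hjp hme (Or.inr hm0), hr0 j hje hme (Or.inr hm0)]
          · by_cases hε1 : ε j = 1
            · rw [h5 j hje hjp hme hmp hε1, hr2 j hje hme hε1 hmp]
            · have hε0 : ε j = 0 := by have := hε j; omega
              rw [h6 j hje hjp hme (Or.inl hε0), hr0 j hje hme (Or.inl hε1)]
        · rw [h7 j hje hjp hmo, hrmodd j hje hmo]
      · rw [h2 j hjo, hrodd j hjo]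
    refine Prod.ext ?_ ?_ <;> funext j
    · exact hre j
    · show p' j = mc j - r j
      have := h1 j
      have := hre j
      omega
end

section
/- Let ν_1 > ... > ν_{2s} and ν'_1 > ... > ν'_{2t} be strictly decreasing sequences of odd positive integers with t ≤ s and Σν_k + Σν'_k = 2n. Define c_j = ν_j + ν'_j for j ≤ 2t, and for 2t < j ≤ 2s set c_j = ν_j - 1 if j is odd and c_j = ν_j + 1 if j is even. Then all c_j are even and positive, c_1 ≥ c_2 ≥ ... ≥ c_{2s}, and there is no index j with c_j = c_{j+1} = c_{j+2}. -/
/-- ν_1 > ... > ν_{2s}, ν'_1 > ... > ν'_{2t} odd positive, t ≤ s,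
total sum 2n. c_j = ν_j + ν'_j for j ≤ 2t; for 2t < j ≤ 2s, c_j = ν_j - 1 if j odd
and ν_j + 1 if j even. Then all c_j are even and positive, weakly decreasing,
and no index j with c_j = c_{j+1} = c_{j+2}. -/
theorem stmt7 (n s t : ℕ) (hts : t ≤ s) (ν ν' c : ℕ → ℕ)
    (hν : ∀ i, 1 ≤ i → i < 2*s → ν (i+1) < ν i)
    (hνodd : ∀ i, 1 ≤ i → i ≤ 2*s → Odd (ν i) ∧ 1 ≤ ν i)
    (hν' : ∀ i, 1 ≤ i → i < 2*t → ν' (i+1) < ν' i)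
    (hν'odd : ∀ i, 1 ≤ i → i ≤ 2*t → Odd (ν' i) ∧ 1 ≤ ν' i)
    (hsum : ∑ i ∈ Finset.Icc 1 (2*s), ν i + ∑ i ∈ Finset.Icc 1 (2*t), ν' i = 2*n)
    (hc1 : ∀ j, 1 ≤ j → j ≤ 2*t → c j = ν j + ν' j)
    (hc2 : ∀ j, 2*t < j → j ≤ 2*s → c j = if Odd j then ν j - 1 else ν j + 1) :
    (∀ j, 1 ≤ j → j ≤ 2*s → Even (c j) ∧ 0 < c j) ∧
    (∀ j, 1 ≤ j → j < 2*s → c (j+1) ≤ c j) ∧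
    ¬ ∃ j, 1 ≤ j ∧ j + 2 ≤ 2*s ∧ c j = c (j+1) ∧ c (j+1) = c (j+2) := by
  have key : ∀ a b : ℕ, Odd a → Odd b → b < a → b + 2 ≤ a := by
    rintro a b ⟨p, rfl⟩ ⟨q, rfl⟩ h; omega
  refine ⟨?_, ?_, ?_⟩
  · intro j h1 h2
    by_cases hj : j ≤ 2*t
    · rw [hc1 j h1 hj]
      obtain ⟨⟨p, hp⟩, hp1⟩ := hνodd j h1 h2
      obtain ⟨⟨q, hq⟩, hq1⟩ := hν'odd j h1 hj
      exact ⟨⟨p + q + 1, by omega⟩, by omega⟩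
    · push_neg at hj
      rw [hc2 j hj h2]
      obtain ⟨⟨p, hp⟩, hp1⟩ := hνodd j h1 h2
      by_cases ho : Odd j
      · have hjlt : j < 2*s := by
          obtain ⟨m, hm⟩ := ho; omega
        have hlt' := hν j h1 hjlt
        obtain ⟨_, h1'⟩ := hνodd (j+1) (by omega) (by omega)
        rw [if_pos ho]
        exact ⟨⟨p, by omega⟩, by omega⟩
      · rw [if_neg ho]
        exact ⟨⟨p + 1, by omega⟩, by omega⟩
  · intro j h1 hlt
    by_cases h2t : j + 1 ≤ 2*t
    · rw [hc1 j h1 (by omega), hc1 (j+1) (by omega) h2t]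
      have := hν j h1 (by omega)
      have := hν' j h1 (by omega)
      omega
    · push_neg at h2t
      rw [hc2 (j+1) h2t (by omega)]
      have hlt' := hν j h1 hlt
      by_cases hje : j ≤ 2*t
      · rw [hc1 j h1 hje]
        obtain ⟨_, hq1⟩ := hν'odd j h1 hje
        split <;> omega
      · push_neg at hje
        rw [hc2 j hje (by omega)]
        obtain ⟨ho1, _⟩ := hνodd j h1 (by omega)
        obtain ⟨ho2, _⟩ := hνodd (j+1) (by omega) (by omega)
        have hgap := key _ _ ho1 ho2 hlt'
        rcases Nat.even_or_odd j with he | ho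
        · rw [if_neg (Nat.not_odd_iff_even.mpr he), if_pos (Even.add_one he)]
          omega
        · rw [if_pos ho, if_neg (Nat.not_odd_iff_even.mpr (Odd.add_one ho))]
          omega
  · rintro ⟨j, h1, h2, he1, he2⟩
    by_cases ha : j + 1 ≤ 2*t
    · have := hν j h1 (by omega)
      have := hν' j h1 (by omega)
      rw [hc1 j h1 (by omega), hc1 (j+1) (by omega) ha] at he1
      omega
    · push_neg at ha
      by_cases hb : j ≤ 2*t
      · have hje : Even j := ⟨t, by omega⟩
        have := hν j h1 (by omega)
        obtain ⟨_, hq1⟩ := hν'odd j h1 hb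
        rw [hc1 j h1 hb, hc2 (j+1) (by omega) (by omega), if_pos (Even.add_one hje)] at he1
        omega
      · push_neg at hb
        have hg1 := hν j h1 (by omega)
        have hg2 : ν (j+2) < ν (j+1) := hν (j+1) (by omega) (by omega)
        rcases Nat.even_or_odd j with he | ho
        · rw [hc2 j (by omega) (by omega), if_neg (Nat.not_odd_iff_even.mpr he),
            hc2 (j+1) (by omega) (by omega), if_pos (Even.add_one he)] at he1
          omega
        · have ho2 : Odd (j+2) := by
            rw [Nat.odd_iff] at ho ⊢; omega
          rw [hc2 (j+1) (by omega) (by omega),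
            if_neg (Nat.not_odd_iff_even.mpr (Odd.add_one ho)),
            hc2 (j+2) (by omega) (by omega), if_pos ho2] at he2
          omega
end

section
/- Let ν_1 > ν_2 > ... > ν_{2s+1} ≥ 1 be odd integers with sum 2n+1. Define c_{2k+1} = (ν_{2k+1} - 1)/2 for 0 ≤ k ≤ s and c_{2k} = (ν_{2k} + 1)/2 for 1 ≤ k ≤ s, and c_j = 0 for j > 2s+1. Then c_1 ≥ c_2 ≥ c_3 ≥ ..., Σ_j c_j = n, c_1 = c_2 or c_1 > c_2 holds with c_{2k-1} ≥ c_{2k} ≥ c_{2k+1} for all k, and each positive value occurs in c at most twice with equal values only in positions of the form (2k, 2k+1) or (2k-1, 2k); in particular there is no index j with c_j = c_{j+1} = c_{j+2} > 0. -/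
lemma stmt10_par (t : ℕ) :
    (∑ j ∈ Finset.Icc 1 (2*t+1), ((j % 2 : ℕ) : ℤ)) = t + 1 := by
  induction t with
  | zero => simp
  | succ k ih =>
    have h1 : 2*(k+1)+1 = (2*k+1+1)+1 := by ring
    rw [h1, Finset.sum_Icc_succ_top (by omega), Finset.sum_Icc_succ_top (by omega), ih]
    have e1 : (2*k+1+1) % 2 = 0 := by omega
    have e2 : (2*k+1+1+1) % 2 = 1 := by omega
    rw [e1, e2]
    push_cast
    ring

/-- ν_1 > ... > ν_{2s+1} ≥ 1 odd with sum 2n+1;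
c_j = (ν_j - 1)/2 for odd j ≤ 2s+1, c_j = (ν_j + 1)/2 for even j ≤ 2s+1,
c_j = 0 for j > 2s+1. Then c is weakly decreasing, sums to n, each positive
value occurs at most twice, and no j with c_j = c_{j+1} = c_{j+2} > 0. -/
theorem stmt10 (n s : ℕ) (ν c : ℕ → ℕ)
    (hν : ∀ i, 1 ≤ i → i < 2*s+1 → ν (i+1) < ν i)
    (hνodd : ∀ i, 1 ≤ i → i ≤ 2*s+1 → Odd (ν i) ∧ 1 ≤ ν i)
    (hsum : ∑ i ∈ Finset.Icc 1 (2*s+1), ν i = 2*n+1)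
    (hcodd : ∀ j, 1 ≤ j → j ≤ 2*s+1 → Odd j → c j = (ν j - 1)/2)
    (hceven : ∀ j, 1 ≤ j → j ≤ 2*s+1 → Even j → c j = (ν j + 1)/2)
    (hc0 : ∀ j, 2*s+1 < j → c j = 0) :
    (∀ j, 1 ≤ j → c (j+1) ≤ c j) ∧
    (∑ j ∈ Finset.Icc 1 (2*s+1), c j = n) ∧
    (∀ j, 1 ≤ j → c (j+2) = c j → c (j+2) = 0) ∧
    ¬ ∃ j, 1 ≤ j ∧ c j = c (j+1) ∧ c (j+1) = c (j+2) ∧ 0 < c (j+2) := by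
  -- value formulas
  have hco : ∀ j, 1 ≤ j → j ≤ 2*s+1 → j % 2 = 1 → 2 * c j + 1 = ν j := by
    intro j h1 h2 hp
    obtain ⟨a, ha⟩ := (hνodd j h1 h2).1
    have hc := hcodd j h1 h2 (Nat.odd_iff.mpr hp)
    omega
  have hce : ∀ j, 1 ≤ j → j ≤ 2*s+1 → j % 2 = 0 → 2 * c j = ν j + 1 := by
    intro j h1 h2 hp
    obtain ⟨a, ha⟩ := (hνodd j h1 h2).1
    have hc := hceven j h1 h2 (Nat.even_iff.mpr hp)
    omega
  -- step bound
  have hstep : ∀ j, 1 ≤ j → j+1 ≤ 2*s+1 → ν (j+1) + 2 ≤ ν j := by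
    intro j hj hj1
    obtain ⟨a, ha⟩ := (hνodd j hj (by omega)).1
    obtain ⟨b, hb⟩ := (hνodd (j+1) (by omega) hj1).1
    have := hν j hj (by omega)
    omega
  -- monotone
  have hmono : ∀ j, 1 ≤ j → c (j+1) ≤ c j := by
    intro j hj
    by_cases h : j + 1 ≤ 2*s+1
    · have hs := hstep j hj h
      rcases Nat.even_or_odd j with he | ho
      · have hp : j % 2 = 0 := Nat.even_iff.mp he
        have h1 := hce j hj (by omega) hp
        have h2 := hco (j+1) (by omega) h (by omega)
        omega
      · have hp : j % 2 = 1 := Nat.odd_iff.mp ho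
        have h1 := hco j hj (by omega) hp
        have h2 := hce (j+1) (by omega) h (by omega)
        omega
    · rw [hc0 (j+1) (by omega)]; omega
  -- part 3
  have hpart3 : ∀ j, 1 ≤ j → c (j+2) = c j → c (j+2) = 0 := by
    intro j hj heq
    by_cases h : j + 2 ≤ 2*s+1
    · have hs1 := hstep j hj (by omega)
      have hs2 : ν (j+2) + 2 ≤ ν (j+1) := hstep (j+1) (by omega) (by omega)
      rcases Nat.even_or_odd j with he | ho
      · have hp : j % 2 = 0 := Nat.even_iff.mp he
        have h1 := hce j hj (by omega) hp
        have h2 := hce (j+2) (by omega) h (by omega)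
        omega
      · have hp : j % 2 = 1 := Nat.odd_iff.mp ho
        have h1 := hco j hj (by omega) hp
        have h2 := hco (j+2) (by omega) h (by omega)
        omega
    · exact hc0 (j+2) (by omega)
  refine ⟨hmono, ?_, hpart3, ?_⟩
  · -- the sum
    have key : ∀ j ∈ Finset.Icc 1 (2*s+1),
        ((2 * c j : ℕ) : ℤ) = (ν j : ℤ) + 1 - 2 * ((j % 2 : ℕ) : ℤ) := by
      intro j hj
      rw [Finset.mem_Icc] at hj
      rcases Nat.even_or_odd j with he | ho
      · have h1 := hce j hj.1 hj.2 (Nat.even_iff.mp he)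
        have h2 : j % 2 = 0 := Nat.even_iff.mp he
        rw [h2]
        push_cast
        omega
      · have h1 := hco j hj.1 hj.2 (Nat.odd_iff.mp ho)
        have h2 : j % 2 = 1 := Nat.odd_iff.mp ho
        rw [h2]
        push_cast
        omega
    have hseq : (2 : ℤ) * ∑ j ∈ Finset.Icc 1 (2*s+1), (c j : ℤ) = 2 * n := by
      rw [Finset.mul_sum]
      calc ∑ j ∈ Finset.Icc 1 (2*s+1), (2 : ℤ) * (c j : ℤ)
          = ∑ j ∈ Finset.Icc 1 (2*s+1), ((ν j : ℤ) + 1 - 2 * ((j % 2 : ℕ) : ℤ)) := by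
            refine Finset.sum_congr rfl fun j hj => ?_
            have := key j hj
            push_cast at this ⊢
            linarith
        _ = (∑ j ∈ Finset.Icc 1 (2*s+1), ((ν j : ℤ) + 1))
              - 2 * ∑ j ∈ Finset.Icc 1 (2*s+1), ((j % 2 : ℕ) : ℤ) := by
            rw [Finset.sum_sub_distrib, Finset.mul_sum]
        _ = 2 * n := by
            rw [Finset.sum_add_distrib, Finset.sum_const, stmt10_par s]
            have hs' : (∑ j ∈ Finset.Icc 1 (2*s+1), (ν j : ℤ)) = 2*n+1 := by
              rw [← Nat.cast_sum, hsum]; push_cast; ring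
            rw [hs']
            rw [Nat.card_Icc]
            push_cast
            ring
    have : (∑ j ∈ Finset.Icc 1 (2*s+1), (c j : ℤ)) = n := by linarith
    have h2 : ((∑ j ∈ Finset.Icc 1 (2*s+1), c j : ℕ) : ℤ) = (n : ℤ) := by
      rw [Nat.cast_sum]; exact this
    exact_mod_cast h2
  · rintro ⟨j, hj, h1, h2, h3⟩
    have : c (j+2) = c j := (h1.trans h2).symm
    have := hpart3 j hj this
    omega
end
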